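/- Let (G';C') be an instance in which u and u' are twin vertices (N'⟨u⟩ = N'⟨u'⟩, u ≠ u'), let G = G' − u' (the graph obtained from G' by deleting u') and C = C' ∖ {u'}, let n = |V(G)|, and let m ≥ 3 be a common positive integer used to build the polytopes P (for (G;C)) and P' (for (G';C')), both as convex hulls of feasible 0/1 pairs with m steps. Suppose π^x·x + π^y·y ≤ π₀ is valid for P and π^x_{u,j} ≥ 0 for all j = 1,…,m. Then the two inequalities on ℝ^{V'×{1,…,m}} × ℝ^{V'×{1,…,m}} (V' = V(G')) obtained from π by: (16) keeping all coefficients of π, assigning coefficient 0 to every variable x_{u',j} and coefficient π^y_{u,j} to every variable y_{u',j}; and (17) the same but with the x-coefficients of u and u' swapped (coefficient π^x_{u,j} on x_{u',j} and 0 on x_{u,j}), are both valid for P'. Moreover, if additionally G is connected with at least 3 vertices, (G;C) is twin free, π^x·x + π^y·y ≤ π₀ is facet-defining for P, and π₀ ≠ 0, then (16) and (17) are facet-defining for P' (i.e., the corresponding faces of P' have affine dimension 2m(n+1) − 1). -/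

import Mathlib

/-!
Merging `u'` into its twin `u` (maximum of the `x`-rows, sum of the `y`-rows) sends feasible
points of `(G';C')` to feasible points of `(G;C)`, because two twins are never both played; as
`π^x_u ≥ 0`, merging does not decrease the left-hand side, which gives validity of (16).
Exchanging `u` and `u'` is an automorphism of `(G';C')` carrying (16) to (17).

For the dimension, the face of (16) contains two kinds of lifts of the face `F` of `π`: `u'`
copies the first `j` entries of `x_u`, or `u'` takes over the entry `y_{u,j}`. Since `π₀ ≠ 0`,
the facet `F` spans the whole space, so it contains points with `x_{u,j} ≠ 0` and points with
`y_{u,j} ≠ 0`. Differences of their lifts project onto every one of the `2m` coordinates of `u'`,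
while the lift of the direction of `F` has dimension `2nm - 1` and zero `u'`-coordinates;
rank-nullity for the projection to the `u'`-coordinates gives dimension `2(n+1)m - 1`.
-/

open Finset

namespace LegalSeq

variable {V : Type*}

/-- The generalized neighborhood `N⟨v⟩`: the closed neighborhood of `v` if `v ∈ C`,
the open neighborhood otherwise. -/
noncomputable def gN [Fintype V] (G : SimpleGraph V) (C : Set V) (v : V) : Finset V := by
  classical
  exact (Set.toFinite (if v ∈ C then insert v (G.neighborSet v) else G.neighborSet v)).toFinset

/-- The ambient space `ℝ^{V×{1,…,m}} × ℝ^{V×{1,…,m}}` of the polytope of legal sequences. -/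
abbrev Pt (V : Type*) (m : ℕ) := (V × Fin m → ℝ) × (V × Fin m → ℝ)

/-- Feasible 0/1 pairs `(x, y)` of the formulation `F₁` (constraints (1)-(5)). -/
def Feasible [Fintype V] (G : SimpleGraph V) (C : Set V) (m : ℕ) : Set (Pt V m) :=
  { p | (∀ q, p.1 q = 0 ∨ p.1 q = 1) ∧ (∀ q, p.2 q = 0 ∨ p.2 q = 1) ∧
    (∀ i : Fin m, ∑ v : V, p.2 (v, i) ≤ 1) ∧
    (∀ v : V, ∑ i : Fin m, p.2 (v, i) ≤ 1) ∧
    (∀ (v : V) (i : Fin m) (h : i.1 + 1 < m),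
        p.2 (v, ⟨i.1 + 1, h⟩) ≤ ∑ u ∈ gN G C v, (p.1 (u, i) - p.1 (u, ⟨i.1 + 1, h⟩))) ∧
    (∀ (u : V) (i : Fin m), p.1 (u, i) + ∑ v ∈ gN G C u, p.2 (v, i) ≤ 1) ∧
    (∀ (u : V) (i : Fin m) (h : i.1 + 1 < m), p.1 (u, ⟨i.1 + 1, h⟩) ≤ p.1 (u, i)) }

/-- The polytope of legal sequences: the convex hull of the feasible 0/1 pairs. -/
noncomputable def poly [Fintype V] (G : SimpleGraph V) (C : Set V) (m : ℕ) : Set (Pt V m) :=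
  convexHull ℝ (Feasible G C m)

/-- `δ(G;C)`, the minimum cardinality of a generalized neighborhood. -/
noncomputable def gdelta [Fintype V] (G : SimpleGraph V) (C : Set V) : ℕ :=
  sInf (Set.range fun v : V => (gN G C v).card)

/-- The instance `(G;C)` is twin free if distinct vertices have distinct
generalized neighborhoods. -/
def TwinFree [Fintype V] (G : SimpleGraph V) (C : Set V) : Prop :=
  ∀ u v : V, u ≠ v → gN G C u ≠ gN G C v

/-- The inequality `f p ≤ a` is valid for the polytope and the face it defines has affine
dimension `2nm - 1`, i.e. it is facet-defining. -/
def IsFacet [Fintype V] (G : SimpleGraph V) (C : Set V) (m : ℕ)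
    (f : Pt V m → ℝ) (a : ℝ) : Prop :=
  (∀ p ∈ poly G C m, f p ≤ a) ∧
  Module.finrank ℝ ((affineSpan ℝ {p ∈ poly G C m | f p = a}).direction) =
    2 * Fintype.card V * m - 1

/-- The graph `G' − u'` obtained by deleting the vertex `u'`. -/
def delVert {V' : Type*} (G' : SimpleGraph V') (u' : V') :
    SimpleGraph {w : V' // w ≠ u'} :=
  G'.comap Subtype.val

/-- The set `C' ∖ {u'}`, viewed inside the vertex set of `G' − u'`. -/
def delSet {V' : Type*} (C' : Set V') (u' : V') : Set {w : V' // w ≠ u'} :=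
  {w : {w : V' // w ≠ u'} | (w : V') ∈ C'}

end LegalSeq

section FaceDimension

open Module

variable {E F : Type*} [AddCommGroup E] [Module ℝ E] [AddCommGroup F] [Module ℝ F]

theorem LinearMap.mem_convexHull_of_mapsTo (L : E →ₗ[ℝ] F) {S : Set E} {T : Set F}
    (h : Set.MapsTo L S T) {p : E} (hp : p ∈ convexHull ℝ S) : L p ∈ convexHull ℝ T :=
  convexHull_mono h.image_subset (L.image_convexHull S ▸ Set.mem_image_of_mem L hp)

theorem LinearMap.map_direction_le_of_mapsTo (L : E →ₗ[ℝ] F) {S : Set E} {T : Set F}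
    (h : Set.MapsTo L S T) :
    (affineSpan ℝ S).direction.map L ≤ (affineSpan ℝ T).direction := by
  rw [← L.toAffineMap_linear, ← AffineSubspace.map_direction, AffineSubspace.map_span]
  exact AffineSubspace.direction_le (affineSpan_mono ℝ h.image_subset)

theorem LinearEquiv.finrank_direction_image (e : E ≃ₗ[ℝ] F) (S : Set E) :
    finrank ℝ (affineSpan ℝ (e '' S)).direction = finrank ℝ (affineSpan ℝ S).direction := by
  rw [← e.finrank_map_eq, ← (e : E →ₗ[ℝ] F).toAffineMap_linear,
    ← AffineSubspace.map_direction, AffineSubspace.map_span]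
  rfl

theorem vectorSpan_le_ker_of_forall_eq {S : Set E} {f : E →ₗ[ℝ] ℝ} {a : ℝ}
    (hS : ∀ p ∈ S, f p = a) : vectorSpan ℝ S ≤ LinearMap.ker f := by
  rw [vectorSpan_def, Submodule.span_le]
  rintro _ ⟨p, hp, q, hq, rfl⟩
  simp [hS p hp, hS q hq]

variable [FiniteDimensional ℝ E]

theorem finrank_direction_add_one_le {S : Set E} {f : E →ₗ[ℝ] ℝ} {a : ℝ}
    (hS : ∀ p ∈ S, f p = a) (hf : f ≠ 0) :
    finrank ℝ (affineSpan ℝ S).direction + 1 ≤ finrank ℝ E := by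
  have := Module.Dual.finrank_ker_add_one_of_ne_zero hf
  rw [direction_affineSpan]
  have := Submodule.finrank_mono (vectorSpan_le_ker_of_forall_eq hS)
  omega

/-- `f` vanishes on the vector span of `S` but not on `S`, so the linear span of `S` is one
dimension larger. -/
theorem span_eq_top_of_face {S : Set E} {f : E →ₗ[ℝ] ℝ} {a : ℝ} (ha : a ≠ 0)
    (hS : ∀ p ∈ S, f p = a) (hne : S.Nonempty)
    (hdim : finrank ℝ (affineSpan ℝ S).direction + 1 = finrank ℝ E) :
    Submodule.span ℝ S = ⊤ := by
  obtain ⟨p, hp⟩ := hne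
  have hlt : vectorSpan ℝ S < Submodule.span ℝ S := by
    refine lt_of_le_of_ne ?_ fun h => ?_
    · rw [vectorSpan_def, Submodule.span_le]
      rintro _ ⟨p, hp, q, hq, rfl⟩
      exact Submodule.sub_mem _ (Submodule.subset_span hp) (Submodule.subset_span hq)
    · have := vectorSpan_le_ker_of_forall_eq hS (h ▸ Submodule.subset_span hp)
      exact ha (by rwa [LinearMap.mem_ker, hS p hp] at this)
  have := Submodule.finrank_lt_finrank_of_lt hlt
  rw [← direction_affineSpan] at this
  exact Submodule.eq_top_of_finrank_eq (le_antisymm (Submodule.finrank_le _) (by omega))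

theorem finrank_map_add_finrank_le_of_le_ker (π : E →ₗ[ℝ] F) {A D : Submodule ℝ E}
    (hAD : A ≤ D) (hA : A ≤ LinearMap.ker π) : finrank ℝ (D.map π) + finrank ℝ A ≤ finrank ℝ D := by
  have := (π.domRestrict D).finrank_range_add_finrank_ker
  rw [LinearMap.range_domRestrict, LinearMap.ker_domRestrict] at this
  have := Submodule.finrank_mono (Submodule.comap_mono (f := D.subtype) hA)
  rw [(Submodule.comapSubtypeEquivOfLe hAD).finrank_eq] at this
  omega

end FaceDimension

section Coordinates

variable {ι : Type*} [DecidableEq ι]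

theorem exists_mem_fst_ne_zero {S : Set ((ι → ℝ) × (ι → ℝ))}
    (hspan : Submodule.span ℝ S = ⊤) (i : ι) : ∃ p ∈ S, p.1 i ≠ 0 := by
  by_contra! h
  have := LinearMap.congr_fun (LinearMap.ext_on hspan (g := 0)
    (f := LinearMap.proj i ∘ₗ LinearMap.fst ℝ _ _) h) (Pi.single i 1, 0)
  simp at this

theorem exists_mem_snd_ne_zero {S : Set ((ι → ℝ) × (ι → ℝ))}
    (hspan : Submodule.span ℝ S = ⊤) (i : ι) : ∃ p ∈ S, p.2 i ≠ 0 := by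
  by_contra! h
  have := LinearMap.congr_fun (LinearMap.ext_on hspan (g := 0)
    (f := LinearMap.proj i ∘ₗ LinearMap.snd ℝ _ _) h) (0, Pi.single i 1)
  simp at this

theorem Submodule.eq_top_of_forall_single_mem [Fintype ι]
    (M : Submodule ℝ ((ι → ℝ) × (ι → ℝ))) (hx : ∀ i, ∃ c ≠ 0, (Pi.single i c, 0) ∈ M)
    (hy : ∀ i, ∃ c ≠ 0, (0, Pi.single i c) ∈ M) : M = ⊤ := by
  have hx' : ∀ i t, (Pi.single i t, (0 : ι → ℝ)) ∈ M := fun i t => by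
    obtain ⟨c, hc, hmem⟩ := hx i
    convert M.smul_mem (t / c) hmem using 1
    simp [← Pi.single_smul', hc]
  have hy' : ∀ i t, ((0 : ι → ℝ), Pi.single i t) ∈ M := fun i t => by
    obtain ⟨c, hc, hmem⟩ := hy i
    convert M.smul_mem (t / c) hmem using 1
    simp [← Pi.single_smul', hc]
  rw [Submodule.eq_top_iff']
  rintro ⟨a, b⟩
  have : (a, b) = ∑ i, (Pi.single i (a i), 0) + ∑ i, (0, Pi.single i (b i)) := by
    ext <;> simp [Prod.fst_sum, Prod.snd_sum, Finset.univ_sum_single]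
  rw [this]
  exact M.add_mem (M.sum_mem fun i _ => hx' i _) (M.sum_mem fun i _ => hy' i _)

end Coordinates

namespace LegalSeq

variable {V : Type*}

theorem mem_gN [Fintype V] {G : SimpleGraph V} {C : Set V} {v w : V} :
    w ∈ gN G C v ↔ G.Adj v w ∨ (w = v ∧ v ∈ C) := by
  classical
  unfold gN
  rw [Set.Finite.mem_toFinset]
  by_cases h : v ∈ C <;> simp [h, SimpleGraph.mem_neighborSet]
  tauto

theorem mem_gN_comm [Fintype V] {G : SimpleGraph V} {C : Set V} {v w : V} :
    w ∈ gN G C v ↔ v ∈ gN G C w := by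
  simp only [mem_gN, G.adj_comm v w]
  constructor <;> rintro (h | ⟨rfl, h⟩) <;> simp_all

theorem mem_gN_twin_iff [Fintype V] {G : SimpleGraph V} {C : Set V} {u u' : V}
    (htwin : gN G C u = gN G C u') (w : V) : u ∈ gN G C w ↔ u' ∈ gN G C w := by
  rw [mem_gN_comm, htwin, ← mem_gN_comm]

namespace Feasible

variable [Fintype V] {G : SimpleGraph V} {C : Set V} {m : ℕ} {p : Pt V m}

theorem x_nonneg (hp : p ∈ Feasible G C m) (q : V × Fin m) : 0 ≤ p.1 q := by
  rcases hp.1 q with h | h <;> simp [h]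

theorem x_le_one (hp : p ∈ Feasible G C m) (q : V × Fin m) : p.1 q ≤ 1 := by
  rcases hp.1 q with h | h <;> simp [h]

theorem y_nonneg (hp : p ∈ Feasible G C m) (q : V × Fin m) : 0 ≤ p.2 q := by
  rcases hp.2.1 q with h | h <;> simp [h]

theorem y_le_one (hp : p ∈ Feasible G C m) (q : V × Fin m) : p.2 q ≤ 1 := by
  rcases hp.2.1 q with h | h <;> simp [h]

theorem x_antitone (hp : p ∈ Feasible G C m) (w : V) {i j : Fin m} (hij : i ≤ j) :
    p.1 (w, j) ≤ p.1 (w, i) := by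
  have ⟨_, _, _, _, _, _, hmono⟩ := hp
  obtain ⟨j, hj⟩ := j
  have hij' : i.1 ≤ j := hij
  induction j with
  | zero => rw [show i = ⟨0, hj⟩ from Fin.ext (Nat.le_zero.1 hij')]
  | succ k ih =>
    rcases hij'.eq_or_lt with h | h
    · rw [show i = ⟨k + 1, hj⟩ from Fin.ext h]
    · exact (hmono w ⟨k, by omega⟩ hj).trans (ih (by omega) (Fin.le_def.2 (by
        simp only; omega)) (by omega))

theorem x_eq_zero_of_y_eq_one (hp : p ∈ Feasible G C m) {a w : V} (ha : a ∈ gN G C w)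
    {i : Fin m} (hy : p.2 (a, i) = 1) : p.1 (w, i) = 0 := by
  have hsum : p.2 (a, i) ≤ ∑ v ∈ gN G C w, p.2 (v, i) :=
    Finset.single_le_sum (fun v _ => y_nonneg hp (v, i)) ha
  have ⟨_, _, _, _, _, hdom, _⟩ := hp
  linarith [hdom w i, x_nonneg hp (w, i)]

theorem exists_x_drop (hp : p ∈ Feasible G C m) {v : V} {i : Fin m} (h : i.1 + 1 < m)
    (hy : p.2 (v, ⟨i.1 + 1, h⟩) = 1) :
    ∃ w ∈ gN G C v, p.1 (w, i) = 1 ∧ p.1 (w, ⟨i.1 + 1, h⟩) = 0 := by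
  by_contra! hno
  have hdrop : ∀ w ∈ gN G C v, p.1 (w, i) - p.1 (w, ⟨i.1 + 1, h⟩) ≤ 0 := by
    intro w hw
    rcases hp.1 (w, i) with h0 | h1
    · linarith [x_nonneg hp (w, ⟨i.1 + 1, h⟩)]
    · rcases hp.1 (w, ⟨i.1 + 1, h⟩) with h0' | h1'
      · exact absurd h0' (hno w hw h1)
      · linarith
  have ⟨_, _, _, _, hplay, _, _⟩ := hp
  linarith [hplay v i h, Finset.sum_nonpos hdrop]

variable [DecidableEq V] {a b : V}

theorem y_add_y_le_one (hp : p ∈ Feasible G C m) (hab : a ≠ b) (i : Fin m) :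
    p.2 (a, i) + p.2 (b, i) ≤ 1 := by
  have ⟨_, _, hstep, _, _, _, _⟩ := hp
  rw [← Finset.sum_pair (f := fun v => p.2 (v, i)) hab]
  exact (Finset.sum_le_sum_of_subset_of_nonneg (Finset.subset_univ _)
    fun v _ _ => y_nonneg hp (v, i)).trans (hstep i)

theorem twin_not_played_after (hp : p ∈ Feasible G C m) (hab : a ≠ b)
    (hN : gN G C a = gN G C b) {i j : Fin m} (hij : i ≤ j) (ha : p.2 (a, i) = 1)
    (hb : p.2 (b, j) = 1) : False := by
  obtain ⟨j, hj⟩ := j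
  rcases (show i.1 ≤ j from hij).eq_or_lt with h | h
  · have := y_add_y_le_one hp hab i
    rw [ha, show i = ⟨j, hj⟩ from Fin.ext h, hb] at this
    norm_num at this
  · obtain ⟨k, rfl⟩ : ∃ k, j = k + 1 := ⟨j - 1, by omega⟩
    -- some `w ∈ N⟨b⟩ = N⟨a⟩` is undominated up to step `k ≥ i`, yet `a ∈ N⟨w⟩` is played
    -- at step `i`
    obtain ⟨w, hw, hwk, -⟩ := exists_x_drop (i := ⟨k, by omega⟩) hp hj hb
    have hwi : p.1 (w, i) = 0 :=
      x_eq_zero_of_y_eq_one hp (mem_gN_comm.1 (hN ▸ hw)) ha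
    have hik : i ≤ ⟨k, by omega⟩ := Fin.le_def.2 (by simp only; omega)
    linarith [x_antitone hp w hik]

theorem sum_y_add_sum_y_le_one_of_twins (hp : p ∈ Feasible G C m) (hab : a ≠ b)
    (hN : gN G C a = gN G C b) : ∑ i, p.2 (a, i) + ∑ i, p.2 (b, i) ≤ 1 := by
  have ⟨_, hy, _, hvertex, _, _, _⟩ := hp
  by_cases ha : ∀ i, p.2 (a, i) = 0
  · simpa [ha] using hvertex b
  · push Not at ha
    obtain ⟨i, hi⟩ := ha
    have hi : p.2 (a, i) = 1 := (hy (a, i)).resolve_left hi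
    have hb : ∀ j, p.2 (b, j) = 0 := by
      intro j
      refine (hy (b, j)).resolve_right fun hj => ?_
      rcases le_total i j with hij | hji
      · exact twin_not_played_after hp hab hN hij hi hj
      · exact twin_not_played_after hp hab.symm hN.symm hji hj hi
    simpa [hb] using hvertex a

end Feasible

section Twins

variable {V' : Type*} [Fintype V'] [DecidableEq V'] {G' : SimpleGraph V'} {C' : Set V'}
  {u u' : V'}

theorem mem_gN_delVert {v w : {w : V' // w ≠ u'}} :
    w ∈ gN (delVert G' u') (delSet C' u') v ↔ (w : V') ∈ gN G' C' v := by
  simp only [mem_gN, delVert, delSet, SimpleGraph.comap_adj, Set.mem_ofPred_eq, Subtype.ext_iff]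

theorem sum_gN_eq_sum_gN_delVert_add (w : {w : V' // w ≠ u'}) (F : V' → ℝ) :
    ∑ v ∈ gN G' C' w, F v
      = ∑ v ∈ gN (delVert G' u') (delSet C' u') w, F v
        + if u' ∈ gN G' C' w then F u' else 0 := by
  have himage : (gN (delVert G' u') (delSet C' u') w).map (Function.Embedding.subtype _)
      = (gN G' C' w).erase u' := by
    ext v
    simp only [Finset.mem_map, Function.Embedding.coe_subtype, Finset.mem_erase]
    constructor
    · rintro ⟨v, hv, rfl⟩
      exact ⟨v.2, mem_gN_delVert.1 hv⟩
    · rintro ⟨hv, hvw⟩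
      exact ⟨⟨v, hv⟩, mem_gN_delVert.2 hvw, rfl⟩
  split_ifs with h
  · rw [← Finset.sum_erase_add _ _ h, ← himage, Finset.sum_map]
    rfl
  · rw [← Finset.erase_eq_of_notMem h, ← himage, Finset.sum_map, add_zero]
    rfl

theorem sum_gN_delVert_ite (hne : u ≠ u') (htwin : gN G' C' u = gN G' C' u')
    (w : {w : V' // w ≠ u'}) (F : V' → ℝ) (a : ℝ) :
    ∑ v ∈ gN (delVert G' u') (delSet C' u') w, (if (v : V') = u then a else F v)
      = ∑ v ∈ gN G' C' w, F v + if u ∈ gN G' C' w then a - F u - F u' else 0 := by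
  have hupdate : ∑ v ∈ gN G' C' w, (if v = u then a else F v)
      = ∑ v ∈ gN G' C' w, F v + if u ∈ gN G' C' w then a - F u else 0 := by
    rw [← Finset.sum_ite_eq' (gN G' C' w) u (fun _ => a - F u), ← Finset.sum_add_distrib]
    exact Finset.sum_congr rfl fun v _ => by split_ifs <;> simp_all
  have hsplit := sum_gN_eq_sum_gN_delVert_add (G' := G') (C' := C') w
    (fun v => if v = u then a else F v)
  rw [if_neg hne.symm, hupdate] at hsplit
  by_cases hu : u ∈ gN G' C' w
  · simp only [hu, (mem_gN_twin_iff htwin w).1 hu, if_true] at hsplit ⊢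
    linarith
  · simp only [hu, mt (mem_gN_twin_iff htwin w).2 hu, if_false] at hsplit ⊢
    linarith

theorem sum_subtype_ite (hne : u ≠ u') (F : V' → ℝ) (a : ℝ) :
    ∑ v : {w : V' // w ≠ u'}, (if (v : V') = u then a else F v)
      = ∑ v, F v + (a - F u - F u') := by
  have hupdate : ∑ v : V', (if v = u then a else F v) = ∑ v, F v + (a - F u) := by
    have := Finset.sum_ite_eq' Finset.univ u (fun _ => a - F u)
    rw [if_pos (Finset.mem_univ u)] at this
    rw [← this, ← Finset.sum_add_distrib]
    exact Finset.sum_congr rfl fun v _ => by split_ifs <;> simp_all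
  rw [Fintype.sum_eq_add_sum_subtype_ne _ u', if_neg hne.symm] at hupdate
  linarith

end Twins

section Swap

variable {V' : Type*} [DecidableEq V'] {u u' : V'} {m : ℕ}

def twinSwap (u u' : V') : Pt V' m ≃ₗ[ℝ] Pt V' m :=
  let e := LinearEquiv.funCongrLeft ℝ ℝ ((Equiv.swap u u').prodCongr (Equiv.refl (Fin m)))
  e.prodCongr e

@[simp]
theorem twinSwap_fst (p : Pt V' m) (v : V') (i : Fin m) :
    (twinSwap u u' p).1 (v, i) = p.1 (Equiv.swap u u' v, i) := rfl

@[simp]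
theorem twinSwap_snd (p : Pt V' m) (v : V') (i : Fin m) :
    (twinSwap u u' p).2 (v, i) = p.2 (Equiv.swap u u' v, i) := rfl

@[simp]
theorem twinSwap_twinSwap (p : Pt V' m) : twinSwap u u' (twinSwap u u' p) = p := by
  ext ⟨v, i⟩ <;> simp

variable [Fintype V'] {G' : SimpleGraph V'} {C' : Set V'}

theorem gN_swap (htwin : gN G' C' u = gN G' C' u') (w : V') :
    gN G' C' (Equiv.swap u u' w) = gN G' C' w := by
  rcases eq_or_ne w u with rfl | hu
  · rw [Equiv.swap_apply_left, htwin]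
  rcases eq_or_ne w u' with rfl | hu'
  · rw [Equiv.swap_apply_right, htwin]
  rw [Equiv.swap_apply_of_ne_of_ne hu hu']

theorem sum_gN_comp_swap (htwin : gN G' C' u = gN G' C' u') (w : V') (F : V' → ℝ) :
    ∑ v ∈ gN G' C' w, F (Equiv.swap u u' v) = ∑ v ∈ gN G' C' w, F v := by
  have hmem : ∀ v ∈ gN G' C' w, Equiv.swap u u' v ∈ gN G' C' w := fun v hv => by
    rwa [mem_gN_comm, gN_swap htwin, ← mem_gN_comm]
  exact Finset.sum_nbij' _ _ hmem hmem (fun v _ => Equiv.swap_apply_self ..)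
    (fun v _ => Equiv.swap_apply_self ..) fun _ _ => rfl

theorem twinSwap_mem_feasible (htwin : gN G' C' u = gN G' C' u') {p : Pt V' m}
    (hp : p ∈ Feasible G' C' m) : twinSwap u u' p ∈ Feasible G' C' m := by
  obtain ⟨hx, hy, hstep, hvertex, hplay, hdom, hmono⟩ := hp
  refine ⟨fun _ => hx _, fun _ => hy _, fun i => ?_, fun v => hvertex _, fun v i h => ?_,
    fun w i => ?_, fun w i h => hmono _ i h⟩
  · simpa only [twinSwap_snd, Equiv.sum_comp (Equiv.swap u u') (fun v => p.2 (v, i))]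
      using hstep i
  · have := hplay (Equiv.swap u u' v) i h
    rw [gN_swap htwin, ← sum_gN_comp_swap htwin v
      (fun w => p.1 (w, i) - p.1 (w, ⟨i.1 + 1, h⟩))] at this
    simpa using this
  · have := hdom (Equiv.swap u u' w) i
    rw [gN_swap htwin, ← sum_gN_comp_swap htwin w (fun v => p.2 (v, i))] at this
    simpa using this

theorem twinSwap_mem_poly (htwin : gN G' C' u = gN G' C' u') {p : Pt V' m}
    (hp : p ∈ poly G' C' m) : twinSwap u u' p ∈ poly G' C' m :=
  (twinSwap u u').toLinearMap.mem_convexHull_of_mapsTo (S := Feasible G' C' m)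
    (fun _ hq => twinSwap_mem_feasible htwin hq) hp

end Swap

section TwinRow

variable {V' : Type*} {m : ℕ}

def twinRow (u' : V') : Pt V' m →ₗ[ℝ] (Fin m → ℝ) × (Fin m → ℝ) :=
  (LinearMap.funLeft ℝ ℝ fun i => (u', i)).prodMap (LinearMap.funLeft ℝ ℝ fun i => (u', i))

@[simp]
theorem twinRow_apply (q : Pt V' m) : twinRow u' q = (fun i => q.1 (u', i), fun i => q.2 (u', i)) :=
  rfl

end TwinRow

section Lifts

variable {V' : Type*} [DecidableEq V'] {u u' : V'} (hne : u ≠ u') {m : ℕ}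

def liftCopy (j : ℕ) : Pt {w : V' // w ≠ u'} m →ₗ[ℝ] Pt V' m where
  toFun p :=
    (fun q => if h : q.1 = u' then (if q.2.1 < j then p.1 (⟨u, hne⟩, q.2) else 0)
      else p.1 (⟨q.1, h⟩, q.2),
     fun q => if h : q.1 = u' then 0 else p.2 (⟨q.1, h⟩, q.2))
  map_add' p q := by ext ⟨v, i⟩ <;> simp only [Prod.fst_add, Prod.snd_add, Pi.add_apply] <;>
    split_ifs <;> simp
  map_smul' c p := by ext ⟨v, i⟩ <;> simp only [Prod.smul_fst, Prod.smul_snd, Pi.smul_apply] <;>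
    split_ifs <;> simp

def liftMove (j : Fin m) : Pt {w : V' // w ≠ u'} m →ₗ[ℝ] Pt V' m where
  toFun p :=
    (fun q => if h : q.1 = u' then 0 else p.1 (⟨q.1, h⟩, q.2),
     fun q => if h : q.1 = u' then (if q.2 = j then p.2 (⟨u, hne⟩, j) else 0)
      else if q.1 = u ∧ q.2 = j then 0 else p.2 (⟨q.1, h⟩, q.2))
  map_add' p q := by ext ⟨v, i⟩ <;> simp only [Prod.fst_add, Prod.snd_add, Pi.add_apply] <;>
    split_ifs <;> simp
  map_smul' c p := by ext ⟨v, i⟩ <;> simp only [Prod.smul_fst, Prod.smul_snd, Pi.smul_apply] <;>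
    split_ifs <;> simp

variable (j : ℕ) (k : Fin m) (p : Pt {w : V' // w ≠ u'} m) (i : Fin m)

@[simp]
theorem liftCopy_fst_val (v : {w : V' // w ≠ u'}) : (liftCopy hne j p).1 (v, i) = p.1 (v, i) := by
  simp [liftCopy, v.2]

@[simp]
theorem liftCopy_fst_self :
    (liftCopy hne j p).1 (u', i) = if i.1 < j then p.1 (⟨u, hne⟩, i) else 0 := by
  simp [liftCopy]

@[simp]
theorem liftCopy_snd_val (v : {w : V' // w ≠ u'}) : (liftCopy hne j p).2 (v, i) = p.2 (v, i) := by
  simp [liftCopy, v.2]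

@[simp]
theorem liftCopy_snd_twin : (liftCopy hne j p).2 (u, i) = p.2 (⟨u, hne⟩, i) := by
  simp [liftCopy, hne]

@[simp]
theorem liftCopy_snd_self : (liftCopy hne j p).2 (u', i) = 0 := by
  simp [liftCopy]

@[simp]
theorem liftMove_fst_val (v : {w : V' // w ≠ u'}) : (liftMove hne k p).1 (v, i) = p.1 (v, i) := by
  simp [liftMove, v.2]

@[simp]
theorem liftMove_fst_self : (liftMove hne k p).1 (u', i) = 0 := by
  simp [liftMove]

@[simp]
theorem liftMove_snd_val (v : {w : V' // w ≠ u'}) :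
    (liftMove hne k p).2 (v, i) = if v = ⟨u, hne⟩ ∧ i = k then 0 else p.2 (v, i) := by
  simp [liftMove, v.2, Subtype.ext_iff]

@[simp]
theorem liftMove_snd_twin :
    (liftMove hne k p).2 (u, i) = if i = k then 0 else p.2 (⟨u, hne⟩, i) := by
  simp [liftMove, hne]

@[simp]
theorem liftMove_snd_self :
    (liftMove hne k p).2 (u', i) = if i = k then p.2 (⟨u, hne⟩, k) else 0 := by
  simp [liftMove]

theorem liftMove_snd_twin_add_self :
    (liftMove hne k p).2 (u, i) + (liftMove hne k p).2 (u', i) = p.2 (⟨u, hne⟩, i) := by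
  simp only [liftMove_snd_twin, liftMove_snd_self]
  split_ifs with h <;> simp [h]

theorem ite_liftMove_snd (v : {w : V' // w ≠ u'}) :
    (if (v : V') = u then p.2 (⟨u, hne⟩, i) else (liftMove hne k p).2 (v, i)) = p.2 (v, i) := by
  by_cases hv : v = ⟨u, hne⟩
  · simp [hv]
  · simp [hv, Subtype.ext_iff.not.1 hv]

theorem liftCopy_injective : Function.Injective (liftCopy hne j (m := m)) := by
  intro p q h
  ext ⟨v, i⟩
  · simpa using congrFun (congrArg Prod.fst h) (v, i)
  · simpa using congrFun (congrArg Prod.snd h) (v, i)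

end Lifts

section Differences

variable {V' : Type*} [DecidableEq V'] {u u' : V'} (hne : u ≠ u') {m : ℕ}
  (p : Pt {w : V' // w ≠ u'} m)

theorem twinRow_liftCopy_zero : twinRow u' (liftCopy hne 0 p) = 0 := by
  ext i <;> simp

theorem liftCopy_succ_sub (i : Fin m) :
    liftCopy hne (i.1 + 1) p - liftCopy hne i p
      = p.1 (⟨u, hne⟩, i) • (Pi.single (u', i) 1, 0) := by
  ext ⟨v, k⟩
  · rcases eq_or_ne v u' with rfl | hv
    · simp only [Prod.fst_sub, Pi.sub_apply, liftCopy_fst_self, Prod.smul_fst, Pi.smul_apply,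
        Pi.single_apply, Prod.mk.injEq, true_and, smul_eq_mul, mul_ite, mul_one, mul_zero]
      rcases lt_trichotomy k i with h | rfl | h
      · simp [h, h.ne, show k.1 < i.1 + 1 by omega]
      · simp
      · simp [h.ne', show ¬ k.1 < i.1 by omega, show ¬ k.1 < i.1 + 1 by omega]
    · lift v to {w : V' // w ≠ u'} using hv
      simp [v.2]
  · rcases eq_or_ne v u' with rfl | hv
    · simp
    · lift v to {w : V' // w ≠ u'} using hv
      simp

theorem liftMove_sub_liftCopy (k : Fin m) :
    liftMove hne k p - liftCopy hne 0 p
      = p.2 (⟨u, hne⟩, k)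
        • ((0 : V' × Fin m → ℝ), Pi.single (u', k) 1 - Pi.single (u, k) 1) := by
  ext ⟨v, i⟩
  · rcases eq_or_ne v u' with rfl | hv
    · simp
    · lift v to {w : V' // w ≠ u'} using hv
      simp
  · rcases eq_or_ne v u' with rfl | hv
    · simp [Pi.single_apply, hne]
    · lift v to {w : V' // w ≠ u'} using hv
      by_cases hvu : v = ⟨u, hne⟩
      · subst hvu
        by_cases hik : i = k <;> simp [hne, hik]
      · simp [hvu, Subtype.ext_iff.not.1 hvu, v.2]

end Differences

section LiftFeasible

variable {V' : Type*} [Fintype V'] [DecidableEq V'] {G' : SimpleGraph V'} {C' : Set V'}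
  {u u' : V'} {m : ℕ} {p : Pt {w : V' // w ≠ u'} m}

theorem liftCopy_fst_succ_le (hne : u ≠ u') (hp : p ∈ Feasible (delVert G' u') (delSet C' u') m)
    (j : ℕ) (w : V') (i : Fin m) (h : i.1 + 1 < m) :
    (liftCopy hne j p).1 (w, ⟨i.1 + 1, h⟩) ≤ (liftCopy hne j p).1 (w, i) := by
  have ⟨_, _, _, _, _, _, hmono⟩ := hp
  rcases eq_or_ne w u' with rfl | hw
  · simp only [liftCopy_fst_self]
    split_ifs <;> first | exact hmono _ i h | exact Feasible.x_nonneg hp _ | omega | rfl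
  · lift w to {w : V' // w ≠ u'} using hw
    simpa using hmono w i h

theorem liftCopy_mem_feasible (hne : u ≠ u') (htwin : gN G' C' u = gN G' C' u')
    (hp : p ∈ Feasible (delVert G' u') (delSet C' u') m) (j : ℕ) :
    liftCopy hne j p ∈ Feasible G' C' m := by
  have ⟨hx, hy, hstep, hvertex, hplay, hdom, _⟩ := hp
  have hmono := liftCopy_fst_succ_le hne hp j
  refine ⟨?x01, ?y01, fun i => ?_, ?vertex, ?play, ?dom, hmono⟩
  case x01 =>
    rintro ⟨w, i⟩
    rcases eq_or_ne w u' with rfl | hw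
    · simp only [liftCopy_fst_self]
      split_ifs
      exacts [hx _, Or.inl rfl]
    · lift w to {w : V' // w ≠ u'} using hw
      simpa using hx (w, i)
  case y01 =>
    rintro ⟨w, i⟩
    rcases eq_or_ne w u' with rfl | hw
    · simp
    · lift w to {w : V' // w ≠ u'} using hw
      simpa using hy (w, i)
  · simpa [Fintype.sum_eq_add_sum_subtype_ne _ u'] using hstep i
  case vertex =>
    intro w
    rcases eq_or_ne w u' with rfl | hw
    · simp
    · lift w to {w : V' // w ≠ u'} using hw
      simpa using hvertex w
  case play =>
    intro w i h
    rcases eq_or_ne w u' with rfl | hw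
    · simpa using Finset.sum_nonneg fun v _ => sub_nonneg.2 (hmono v i h)
    · lift w to {w : V' // w ≠ u'} using hw
      rw [sum_gN_eq_sum_gN_delVert_add, liftCopy_snd_val]
      simp only [liftCopy_fst_val]
      split_ifs <;> linarith [hplay w i h, hmono u' i h]
  case dom =>
    intro w i
    rcases eq_or_ne w u' with rfl | hw
    · rw [← htwin, sum_gN_eq_sum_gN_delVert_add (w := ⟨u, hne⟩)]
      simp only [liftCopy_fst_self, liftCopy_snd_val, liftCopy_snd_self, ite_self, add_zero]
      split_ifs <;> linarith [hdom ⟨u, hne⟩ i, Feasible.x_nonneg hp (⟨u, hne⟩, i)]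
    · lift w to {w : V' // w ≠ u'} using hw
      rw [sum_gN_eq_sum_gN_delVert_add]
      simpa using hdom w i

end LiftFeasible

section LiftMoveFeasible

variable {V' : Type*} [Fintype V'] [DecidableEq V'] {G' : SimpleGraph V'} {C' : Set V'}
  {u u' : V'} {m : ℕ} {p : Pt {w : V' // w ≠ u'} m} (hne : u ≠ u') (k : Fin m)

theorem sum_gN_liftMove_snd (htwin : gN G' C' u = gN G' C' u') (w : {w : V' // w ≠ u'})
    (i : Fin m) :
    ∑ v ∈ gN G' C' w, (liftMove hne k p).2 (v, i)
      = ∑ v ∈ gN (delVert G' u') (delSet C' u') w, p.2 (v, i) := by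
  have := sum_gN_delVert_ite hne htwin w (fun v => (liftMove hne k p).2 (v, i))
    (p.2 (⟨u, hne⟩, i))
  simp only [ite_liftMove_snd] at this
  rw [this, ← liftMove_snd_twin_add_self hne k p i]
  simp

theorem sum_gN_liftMove_fst_sub (w : {w : V' // w ≠ u'}) (i : Fin m) (h : i.1 + 1 < m) :
    ∑ v ∈ gN G' C' w, ((liftMove hne k p).1 (v, i) - (liftMove hne k p).1 (v, ⟨i.1 + 1, h⟩))
      = ∑ v ∈ gN (delVert G' u') (delSet C' u') w,
          (p.1 (v, i) - p.1 (v, ⟨i.1 + 1, h⟩)) := by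
  simp [sum_gN_eq_sum_gN_delVert_add w]

theorem liftMove_snd_succ_le (htwin : gN G' C' u = gN G' C' u')
    (hp : p ∈ Feasible (delVert G' u') (delSet C' u') m) (w : V') (i : Fin m) (h : i.1 + 1 < m) :
    (liftMove hne k p).2 (w, ⟨i.1 + 1, h⟩) ≤ ∑ v ∈ gN G' C' w,
      ((liftMove hne k p).1 (v, i) - (liftMove hne k p).1 (v, ⟨i.1 + 1, h⟩)) := by
  have ⟨_, _, _, _, hplay, _, hmono⟩ := hp
  have hsum_nonneg : ∀ w, 0 ≤ ∑ v ∈ gN (delVert G' u') (delSet C' u') w,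
      (p.1 (v, i) - p.1 (v, ⟨i.1 + 1, h⟩)) := fun w =>
    Finset.sum_nonneg fun v _ => sub_nonneg.2 (hmono v i h)
  rcases eq_or_ne w u' with rfl | hw
  · rw [← htwin, sum_gN_liftMove_fst_sub hne k ⟨u, hne⟩, liftMove_snd_self]
    split_ifs with hk
    exacts [hk ▸ hplay ⟨u, hne⟩ i h, hsum_nonneg _]
  · lift w to {w : V' // w ≠ u'} using hw
    rw [sum_gN_liftMove_fst_sub, liftMove_snd_val]
    split_ifs
    exacts [hsum_nonneg _, hplay w i h]

theorem liftMove_fst_add_sum_le_one (htwin : gN G' C' u = gN G' C' u')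
    (hp : p ∈ Feasible (delVert G' u') (delSet C' u') m) (w : V') (i : Fin m) :
    (liftMove hne k p).1 (w, i) + ∑ v ∈ gN G' C' w, (liftMove hne k p).2 (v, i) ≤ 1 := by
  have ⟨_, _, _, _, _, hdom, _⟩ := hp
  rcases eq_or_ne w u' with rfl | hw
  · rw [← htwin, sum_gN_liftMove_snd hne k htwin ⟨u, hne⟩, liftMove_fst_self]
    linarith [hdom ⟨u, hne⟩ i, Feasible.x_nonneg hp (⟨u, hne⟩, i)]
  · lift w to {w : V' // w ≠ u'} using hw
    rw [sum_gN_liftMove_snd hne k htwin, liftMove_fst_val]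
    exact hdom w i

theorem liftMove_mem_feasible (htwin : gN G' C' u = gN G' C' u')
    (hp : p ∈ Feasible (delVert G' u') (delSet C' u') m) :
    liftMove hne k p ∈ Feasible G' C' m := by
  have ⟨hx, hy, hstep, hvertex, _, _, hmono⟩ := hp
  refine ⟨?x01, ?y01, fun i => ?_, ?vertex, liftMove_snd_succ_le hne k htwin hp,
    liftMove_fst_add_sum_le_one hne k htwin hp, ?mono⟩
  case x01 =>
    rintro ⟨w, i⟩
    rcases eq_or_ne w u' with rfl | hw
    · simp
    · lift w to {w : V' // w ≠ u'} using hw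
      simpa using hx (w, i)
  case y01 =>
    rintro ⟨w, i⟩
    rcases eq_or_ne w u' with rfl | hw
    · simp only [liftMove_snd_self]
      split_ifs
      exacts [hy _, Or.inl rfl]
    · lift w to {w : V' // w ≠ u'} using hw
      simp only [liftMove_snd_val]
      split_ifs
      exacts [Or.inl rfl, hy _]
  · have := sum_subtype_ite hne (fun v => (liftMove hne k p).2 (v, i)) (p.2 (⟨u, hne⟩, i))
    simp only [ite_liftMove_snd] at this
    rw [← liftMove_snd_twin_add_self hne k p i] at this
    simpa [this] using hstep i
  case vertex =>
    intro w
    rcases eq_or_ne w u' with rfl | hw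
    · simpa using Feasible.y_le_one hp (⟨u, hne⟩, k)
    · lift w to {w : V' // w ≠ u'} using hw
      refine le_trans (Finset.sum_le_sum fun i _ => ?_) (hvertex w)
      simp only [liftMove_snd_val]
      split_ifs
      exacts [Feasible.y_nonneg hp _, le_rfl]
  case mono =>
    intro w i h
    rcases eq_or_ne w u' with rfl | hw
    · simp
    · lift w to {w : V' // w ≠ u'} using hw
      simpa using hmono w i h

end LiftMoveFeasible

section Merge

variable {V' : Type*} [DecidableEq V'] {u u' : V'} {m : ℕ}

def mergeTwins (u u' : V') (p : Pt V' m) : Pt {w : V' // w ≠ u'} m :=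
  (fun q => if (q.1 : V') = u then max (p.1 (u, q.2)) (p.1 (u', q.2)) else p.1 (q.1, q.2),
   fun q => if (q.1 : V') = u then p.2 (u, q.2) + p.2 (u', q.2) else p.2 (q.1, q.2))

theorem mergeTwins_fst (p : Pt V' m) (v : {w : V' // w ≠ u'}) (i : Fin m) :
    (mergeTwins u u' p).1 (v, i)
      = if (v : V') = u then max (p.1 (u, i)) (p.1 (u', i)) else p.1 (v, i) := rfl

theorem mergeTwins_snd (p : Pt V' m) (v : {w : V' // w ≠ u'}) (i : Fin m) :
    (mergeTwins u u' p).2 (v, i) = if (v : V') = u then p.2 (u, i) + p.2 (u', i) else p.2 (v, i) :=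
  rfl

variable [Fintype V'] {G' : SimpleGraph V'} {C' : Set V'} {p : Pt V' m}

theorem exists_eq_one_of_mergeTwins_snd_eq_one (htwin : gN G' C' u = gN G' C' u')
    (hp : p ∈ Feasible G' C' m) {w : {w : V' // w ≠ u'}} {i : Fin m}
    (hw : (mergeTwins u u' p).2 (w, i) = 1) :
    ∃ a, gN G' C' a = gN G' C' w ∧ p.2 (a, i) = 1 := by
  rw [mergeTwins_snd] at hw
  split_ifs at hw with hwu
  · rw [hwu]
    rcases hp.2.1 (u, i) with h | h
    · exact ⟨u', htwin.symm, by linarith⟩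
    · exact ⟨u, rfl, h⟩
  · exact ⟨w, rfl, hw⟩

/-- When the vertex whose `x`-entry drops is one of the twins, the merged vertex `u` drops, as the
played vertex is a neighbour of both twins. -/
theorem exists_mergeTwins_drop (hne : u ≠ u') (htwin : gN G' C' u = gN G' C' u')
    (hp : p ∈ Feasible G' C' m) {w : {w : V' // w ≠ u'}} {i : Fin m} (h : i.1 + 1 < m)
    (hw : (mergeTwins u u' p).2 (w, ⟨i.1 + 1, h⟩) = 1) :
    ∃ v ∈ gN (delVert G' u') (delSet C' u') w,
      (mergeTwins u u' p).1 (v, i) = 1 ∧ (mergeTwins u u' p).1 (v, ⟨i.1 + 1, h⟩) = 0 := by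
  obtain ⟨a, ha, hya⟩ := exists_eq_one_of_mergeTwins_snd_eq_one htwin hp hw
  obtain ⟨v, hv, hv1, hv0⟩ := Feasible.exists_x_drop hp h hya
  rw [ha] at hv
  by_cases hvu : v = u ∨ v = u'
  · have huw : u ∈ gN G' C' w := by
      rcases hvu with rfl | rfl
      exacts [hv, (mem_gN_twin_iff htwin _).2 hv]
    have hau : a ∈ gN G' C' u := mem_gN_comm.1 (ha ▸ huw)
    refine ⟨⟨u, hne⟩, mem_gN_delVert.2 huw, ?_, ?_⟩
    · rw [mergeTwins_fst, if_pos rfl]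
      refine le_antisymm (max_le (Feasible.x_le_one hp _) (Feasible.x_le_one hp _)) ?_
      rcases hvu with rfl | rfl
      exacts [hv1 ▸ le_max_left _ _, hv1 ▸ le_max_right _ _]
    · rw [mergeTwins_fst, if_pos rfl, Feasible.x_eq_zero_of_y_eq_one hp hau hya,
        Feasible.x_eq_zero_of_y_eq_one hp (htwin ▸ hau) hya, max_self]
  · push Not at hvu
    refine ⟨⟨v, hvu.2⟩, mem_gN_delVert.2 hv, ?_, ?_⟩ <;>
      simp [mergeTwins_fst, hvu.1, hv1, hv0]

theorem mergeTwins_snd_eq_zero_or_eq_one (hne : u ≠ u') (hp : p ∈ Feasible G' C' m)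
    (q : {w : V' // w ≠ u'} × Fin m) :
    (mergeTwins u u' p).2 q = 0 ∨ (mergeTwins u u' p).2 q = 1 := by
  obtain ⟨w, i⟩ := q
  rw [mergeTwins_snd]
  split_ifs
  · rcases hp.2.1 (u, i) with h | h <;> rcases hp.2.1 (u', i) with h' | h'
    · exact Or.inl (by rw [h, h', add_zero])
    · exact Or.inr (by rw [h, h', zero_add])
    · exact Or.inr (by rw [h, h', add_zero])
    · linarith [Feasible.y_add_y_le_one hp hne i]
  · exact hp.2.1 _

theorem mergeTwins_fst_succ_le (hp : p ∈ Feasible G' C' m) (w : {w : V' // w ≠ u'})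
    (i : Fin m) (h : i.1 + 1 < m) :
    (mergeTwins u u' p).1 (w, ⟨i.1 + 1, h⟩) ≤ (mergeTwins u u' p).1 (w, i) := by
  have ⟨_, _, _, _, _, _, hmono⟩ := hp
  simp only [mergeTwins_fst]
  split_ifs
  exacts [max_le_max (hmono u i h) (hmono u' i h), hmono w i h]

theorem mergeTwins_snd_succ_le (hne : u ≠ u') (htwin : gN G' C' u = gN G' C' u')
    (hp : p ∈ Feasible G' C' m) (w : {w : V' // w ≠ u'}) (i : Fin m) (h : i.1 + 1 < m) :
    (mergeTwins u u' p).2 (w, ⟨i.1 + 1, h⟩) ≤ ∑ v ∈ gN (delVert G' u') (delSet C' u') w,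
      ((mergeTwins u u' p).1 (v, i) - (mergeTwins u u' p).1 (v, ⟨i.1 + 1, h⟩)) := by
  have hterm := fun v : {w : V' // w ≠ u'} =>
    sub_nonneg.2 (mergeTwins_fst_succ_le (u := u) hp v i h)
  rcases mergeTwins_snd_eq_zero_or_eq_one hne hp (w, ⟨i.1 + 1, h⟩) with h0 | h1
  · exact h0 ▸ Finset.sum_nonneg fun v _ => hterm v
  · obtain ⟨v, hv, hv1, hv0⟩ := exists_mergeTwins_drop hne htwin hp h h1
    rw [h1]
    calc (1 : ℝ)
        = (mergeTwins u u' p).1 (v, i) - (mergeTwins u u' p).1 (v, ⟨i.1 + 1, h⟩) := by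
          rw [hv1, hv0, sub_zero]
      _ ≤ _ := Finset.single_le_sum (fun v _ => hterm v) hv

theorem mergeTwins_mem_feasible (hne : u ≠ u') (htwin : gN G' C' u = gN G' C' u')
    (hp : p ∈ Feasible G' C' m) :
    mergeTwins u u' p ∈ Feasible (delVert G' u') (delSet C' u') m := by
  have ⟨hx, _, hstep, hvertex, _, hdom, _⟩ := hp
  refine ⟨?x01, mergeTwins_snd_eq_zero_or_eq_one hne hp, fun i => ?_, ?vertex,
    mergeTwins_snd_succ_le hne htwin hp, fun w i => ?_, mergeTwins_fst_succ_le hp⟩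
  case x01 =>
    rintro ⟨w, i⟩
    rw [mergeTwins_fst]
    split_ifs
    · rcases hx (u, i) with h | h <;> rcases hx (u', i) with h' | h' <;> simp [h, h']
    · exact hx _
  · have hsum := sum_subtype_ite hne (fun v => p.2 (v, i)) (p.2 (u, i) + p.2 (u', i))
    simp only [add_sub_cancel_left, sub_self, add_zero] at hsum
    simpa only [mergeTwins_snd, hsum] using hstep i
  case vertex =>
    intro w
    simp only [mergeTwins_snd]
    split_ifs with hw
    · rw [Finset.sum_add_distrib]
      exact Feasible.sum_y_add_sum_y_le_one_of_twins hp hne htwin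
    · exact hvertex w
  · have hsum := sum_gN_delVert_ite hne htwin w (fun v => p.2 (v, i)) (p.2 (u, i) + p.2 (u', i))
    simp only [add_sub_cancel_left, sub_self, ite_self, add_zero] at hsum
    simp only [mergeTwins_snd, mergeTwins_fst, hsum]
    split_ifs with hw
    · have hu' := hdom u' i
      rw [← htwin] at hu'
      rw [hw]
      rcases max_choice (p.1 (u, i)) (p.1 (u', i)) with h | h <;> rw [h]
      exacts [hdom u i, hu']
    · exact hdom w i

end Merge

section Objective

variable [Fintype V] {m : ℕ}

def objective (a b : V × Fin m → ℝ) : Pt V m →ₗ[ℝ] ℝ where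
  toFun p := (∑ q, a q * p.1 q) + (∑ q, b q * p.2 q)
  map_add' p p' := by
    simp only [Prod.fst_add, Prod.snd_add, Pi.add_apply, mul_add, Finset.sum_add_distrib]
    ring
  map_smul' c p := by
    simp only [Prod.smul_fst, Prod.smul_snd, Pi.smul_apply, smul_eq_mul, RingHom.id_apply,
      Finset.mul_sum, mul_add]
    congr 1 <;> exact Finset.sum_congr rfl fun _ _ => by ring

theorem objective_apply (a b : V × Fin m → ℝ) (p : Pt V m) :
    objective a b p = (∑ q, a q * p.1 q) + (∑ q, b q * p.2 q) := rfl

end Objective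

section LiftedObjective

variable {V' : Type*} [DecidableEq V'] {u u' : V'} {m : ℕ}

theorem sum_eq_add_sum_subtype_ne_prod [Fintype V'] (u' : V') (F : V' × Fin m → ℝ) :
    ∑ q, F q = ∑ i, F (u', i) + ∑ q : {w : V' // w ≠ u'} × Fin m, F (q.1, q.2) := by
  rw [Fintype.sum_prod_type, Fintype.sum_eq_add_sum_subtype_ne _ u', Fintype.sum_prod_type]

/-- `πx1, πy1` are the coefficients of inequality (16). -/
structure IsTwinLift (hne : u ≠ u') (πx πy : {w : V' // w ≠ u'} × Fin m → ℝ)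
    (πx1 πy1 : V' × Fin m → ℝ) : Prop where
  x_val : ∀ (v : {w : V' // w ≠ u'}) (i : Fin m), πx1 (v, i) = πx (v, i)
  x_self : ∀ i, πx1 (u', i) = 0
  y_val : ∀ (v : {w : V' // w ≠ u'}) (i : Fin m), πy1 (v, i) = πy (v, i)
  y_self : ∀ i, πy1 (u', i) = πy (⟨u, hne⟩, i)

variable {hne : u ≠ u'} {πx πy : {w : V' // w ≠ u'} × Fin m → ℝ}
  {πx1 πy1 : V' × Fin m → ℝ}

theorem IsTwinLift.comp_swap_snd (h : IsTwinLift hne πx πy πx1 πy1) :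
    (fun q => πy1 (Equiv.swap u u' q.1, q.2)) = πy1 := by
  funext ⟨v, i⟩
  rcases eq_or_ne v u with rfl | hu
  · rw [Equiv.swap_apply_left, h.y_self, ← h.y_val ⟨v, hne⟩]
  rcases eq_or_ne v u' with rfl | hu'
  · rw [Equiv.swap_apply_right, h.y_self, ← h.y_val ⟨u, hne⟩]
  · rw [Equiv.swap_apply_of_ne_of_ne hu hu']

variable [Fintype V']

theorem IsTwinLift.objective_liftCopy (h : IsTwinLift hne πx πy πx1 πy1) (j : ℕ)
    (p : Pt {w : V' // w ≠ u'} m) :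
    objective πx1 πy1 (liftCopy hne j p) = objective πx πy p := by
  simp [objective_apply, sum_eq_add_sum_subtype_ne_prod u', h.x_val, h.x_self, h.y_val]

theorem IsTwinLift.objective_liftMove (h : IsTwinLift hne πx πy πx1 πy1) (k : Fin m)
    (p : Pt {w : V' // w ≠ u'} m) :
    objective πx1 πy1 (liftMove hne k p) = objective πx πy p := by
  have hy : πy1 (u, k) = πy1 (u', k) := by rw [h.y_self, ← h.y_val ⟨u, hne⟩]
  have hδ : objective πx1 πy1
      ((0 : V' × Fin m → ℝ), Pi.single (u', k) 1 - Pi.single (u, k) 1) = 0 := by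
    simp [objective_apply, Pi.single_apply, mul_sub, Finset.sum_sub_distrib, hy]
  have := congrArg (objective πx1 πy1) (liftMove_sub_liftCopy hne p k)
  rwa [map_sub, map_smul, h.objective_liftCopy, hδ, smul_zero, sub_eq_zero] at this

theorem IsTwinLift.objective_le_mergeTwins (h : IsTwinLift hne πx πy πx1 πy1)
    (hnonneg : ∀ i, 0 ≤ πx (⟨u, hne⟩, i)) (p : Pt V' m) :
    objective πx1 πy1 p ≤ objective πx πy (mergeTwins u u' p) := by
  simp only [objective_apply, sum_eq_add_sum_subtype_ne_prod u' (fun q => πx1 q * p.1 q),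
    sum_eq_add_sum_subtype_ne_prod u' (fun q => πy1 q * p.2 q), h.x_self, h.x_val, h.y_self,
    h.y_val, zero_mul, Finset.sum_const_zero, zero_add]
  have hx : ∑ q : {w : V' // w ≠ u'} × Fin m, πx q * p.1 (q.1, q.2)
      ≤ ∑ q, πx q * (mergeTwins u u' p).1 q := by
    refine Finset.sum_le_sum fun ⟨v, i⟩ _ => ?_
    rw [mergeTwins_fst]
    split_ifs with hv
    · obtain rfl : v = ⟨u, hne⟩ := Subtype.ext hv
      exact mul_le_mul_of_nonneg_left (le_max_left _ _) (hnonneg i)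
    · rfl
  have hy : ∑ i, πy (⟨u, hne⟩, i) * p.2 (u', i)
        + ∑ q : {w : V' // w ≠ u'} × Fin m, πy q * p.2 (q.1, q.2)
      = ∑ q, πy q * (mergeTwins u u' p).2 q := by
    have hsnd : ∀ q : {w : V' // w ≠ u'} × Fin m, (mergeTwins u u' p).2 q
        = p.2 (q.1, q.2) + if q.1 = ⟨u, hne⟩ then p.2 (u', q.2) else 0 := by
      rintro ⟨v, i⟩
      rw [mergeTwins_snd]
      by_cases hv : v = ⟨u, hne⟩
      · simp [hv]
      · simp [hv, Subtype.ext_iff.not.1 hv]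
    simp [hsnd, mul_add, Finset.sum_add_distrib, Fintype.sum_prod_type, add_comm]
  linarith

theorem objective_twinSwap (a b : V' × Fin m → ℝ) (p : Pt V' m) :
    objective a b (twinSwap u u' p)
      = objective (fun q => a (Equiv.swap u u' q.1, q.2)) (fun q => b (Equiv.swap u u' q.1, q.2))
          p := by
  let e := (Equiv.swap u u').prodCongr (Equiv.refl (Fin m))
  simp only [objective_apply]
  congr 1
  · exact (e.sum_comp _).symm.trans (Finset.sum_congr rfl fun ⟨v, i⟩ _ => by simp [e])
  · exact (e.sum_comp _).symm.trans (Finset.sum_congr rfl fun ⟨v, i⟩ _ => by simp [e])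

end LiftedObjective

theorem finrank_pt [Fintype V] (m : ℕ) :
    Module.finrank ℝ (Pt V m) = 2 * (Fintype.card V * m) := by
  rw [Module.finrank_prod, Module.finrank_pi]
  simp [Fintype.card_prod]
  ring

section Facets

variable [Fintype V] {G : SimpleGraph V} {C : Set V} {m : ℕ} {f : Pt V m →ₗ[ℝ] ℝ} {a : ℝ}

theorem IsFacet.finrank_direction_add_one (hf : IsFacet G C m f a)
    (hnm : 0 < Fintype.card V * m) :
    Module.finrank ℝ (affineSpan ℝ {p ∈ poly G C m | f p = a}).direction + 1
      = Module.finrank ℝ (Pt V m) := by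
  rw [hf.2, finrank_pt, mul_assoc]
  omega

theorem IsFacet.span_eq_top (hf : IsFacet G C m f a) (ha : a ≠ 0)
    (hnm : 0 < Fintype.card V * m) :
    Submodule.span ℝ {p ∈ poly G C m | f p = a} = ⊤ := by
  have hdim := hf.finrank_direction_add_one hnm
  refine span_eq_top_of_face ha (fun p hp => hp.2) ?_ hdim
  by_contra hF
  rw [Set.not_nonempty_iff_eq_empty.1 hF, AffineSubspace.span_empty,
    AffineSubspace.direction_bot, finrank_bot, finrank_pt] at hdim
  omega

end Facets

section Lifting

open Module

variable {V' : Type*} [Fintype V'] [DecidableEq V'] {G' : SimpleGraph V'} {C' : Set V'}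
  {u u' : V'} {hne : u ≠ u'} {m : ℕ} {πx πy : {w : V' // w ≠ u'} × Fin m → ℝ}
  {πx1 πy1 : V' × Fin m → ℝ} {π0 : ℝ}

theorem IsTwinLift.valid (h : IsTwinLift hne πx πy πx1 πy1) (htwin : gN G' C' u = gN G' C' u')
    (hnonneg : ∀ i, 0 ≤ πx (⟨u, hne⟩, i))
    (hvalid : ∀ p ∈ poly (delVert G' u') (delSet C' u') m, objective πx πy p ≤ π0) :
    ∀ p ∈ poly G' C' m, objective πx1 πy1 p ≤ π0 := fun _ hp =>
  convexHull_min (fun q hq => (h.objective_le_mergeTwins hnonneg q).trans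
      (hvalid _ (subset_convexHull ℝ _ (mergeTwins_mem_feasible hne htwin hq))))
    (convex_halfSpace_le (objective πx1 πy1).isLinear π0) hp

theorem IsTwinLift.mapsTo_liftCopy (h : IsTwinLift hne πx πy πx1 πy1)
    (htwin : gN G' C' u = gN G' C' u') (j : ℕ) :
    Set.MapsTo (liftCopy hne j)
      {p ∈ poly (delVert G' u') (delSet C' u') m | objective πx πy p = π0}
      {p ∈ poly G' C' m | objective πx1 πy1 p = π0} := fun p hp =>
  ⟨(liftCopy hne j).mem_convexHull_of_mapsTo
      (fun _ hq => liftCopy_mem_feasible hne htwin hq j) hp.1,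
    (h.objective_liftCopy j p).trans hp.2⟩

theorem IsTwinLift.mapsTo_liftMove (h : IsTwinLift hne πx πy πx1 πy1)
    (htwin : gN G' C' u = gN G' C' u') (k : Fin m) :
    Set.MapsTo (liftMove hne k)
      {p ∈ poly (delVert G' u') (delSet C' u') m | objective πx πy p = π0}
      {p ∈ poly G' C' m | objective πx1 πy1 p = π0} := fun p hp =>
  ⟨(liftMove hne k).mem_convexHull_of_mapsTo
      (fun _ hq => liftMove_mem_feasible hne k htwin hq) hp.1,
    (h.objective_liftMove k p).trans hp.2⟩

/-- Every entry of `u'` can be moved independently inside the lifted face: consecutive copy-lifts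
differ in a single `x`-entry of `u'`, a move-lift differs from the copy-lift in a single
`y`-entry of `u'` (and one of `u`). -/
theorem IsTwinLift.map_twinRow_direction_eq_top (h : IsTwinLift hne πx πy πx1 πy1)
    (htwin : gN G' C' u = gN G' C' u')
    (hspan : Submodule.span ℝ
      {p ∈ poly (delVert G' u') (delSet C' u') m | objective πx πy p = π0} = ⊤) :
    (affineSpan ℝ {p ∈ poly G' C' m | objective πx1 πy1 p = π0}).direction.map (twinRow u')
      = ⊤ := by
  apply Submodule.eq_top_of_forall_single_mem
  · intro i
    obtain ⟨p, hp, hpi⟩ := exists_mem_fst_ne_zero hspan (⟨u, hne⟩, i)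
    refine ⟨_, hpi, liftCopy hne (i.1 + 1) p - liftCopy hne i p,
      AffineSubspace.vsub_mem_direction (mem_affineSpan ℝ (h.mapsTo_liftCopy htwin _ hp))
        (mem_affineSpan ℝ (h.mapsTo_liftCopy htwin _ hp)), ?_⟩
    ext k <;> simp [liftCopy_succ_sub, Pi.single_apply]
  · intro k
    obtain ⟨p, hp, hpk⟩ := exists_mem_snd_ne_zero hspan (⟨u, hne⟩, k)
    refine ⟨_, hpk, liftMove hne k p - liftCopy hne 0 p,
      AffineSubspace.vsub_mem_direction (mem_affineSpan ℝ (h.mapsTo_liftMove htwin _ hp))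
        (mem_affineSpan ℝ (h.mapsTo_liftCopy htwin _ hp)), ?_⟩
    ext i <;> simp [liftMove_sub_liftCopy, Pi.single_apply, hne]

theorem IsTwinLift.isFacet (h : IsTwinLift hne πx πy πx1 πy1) (htwin : gN G' C' u = gN G' C' u')
    (hm : 0 < m) (hπ0 : π0 ≠ 0) (hval : ∀ p ∈ poly G' C' m, objective πx1 πy1 p ≤ π0)
    (hfacet : IsFacet (delVert G' u') (delSet C' u') m (objective πx πy) π0) :
    IsFacet G' C' m (objective πx1 πy1) π0 := by
  set F := {p ∈ poly (delVert G' u') (delSet C' u') m | objective πx πy p = π0}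
  set F' := {p ∈ poly G' C' m | objective πx1 πy1 p = π0}
  have hnm : 0 < Fintype.card {w : V' // w ≠ u'} * m :=
    Nat.mul_pos (Fintype.card_pos_iff.2 ⟨⟨u, hne⟩⟩) hm
  have hcard : Fintype.card V' = Fintype.card {w : V' // w ≠ u'} + 1 := by
    have := Fintype.card_pos_iff.2 ⟨u'⟩
    simp only [Fintype.card_subtype_compl, Fintype.card_unique]
    omega
  have hspan := hfacet.span_eq_top hπ0 hnm
  have hdim := hfacet.finrank_direction_add_one hnm
  have hlow := finrank_map_add_finrank_le_of_le_ker (twinRow u')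
    ((liftCopy hne 0).map_direction_le_of_mapsTo (h.mapsTo_liftCopy (π0 := π0) htwin 0))
    (by rintro _ ⟨p, -, rfl⟩; exact twinRow_liftCopy_zero hne p)
  rw [h.map_twinRow_direction_eq_top htwin hspan, finrank_top, finrank_prod, finrank_fin_fun,
    ← (Submodule.equivMapOfInjective _ (liftCopy_injective hne 0) _).finrank_eq] at hlow
  change _ + finrank ℝ (affineSpan ℝ F).direction ≤ finrank ℝ (affineSpan ℝ F').direction
    at hlow
  have hf : objective πx1 πy1 ≠ 0 := fun h0 => by
    obtain ⟨p, hp, -⟩ := exists_mem_fst_ne_zero hspan (⟨u, hne⟩, ⟨0, hm⟩)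
    exact hπ0 (((h.mapsTo_liftCopy htwin 0 hp).2.symm.trans (by rw [h0]; rfl)))
  have hup : finrank ℝ (affineSpan ℝ F').direction + 1 ≤ finrank ℝ (Pt V' m) :=
    finrank_direction_add_one_le (fun p hp => hp.2) hf
  rw [finrank_pt] at hdim hup
  refine ⟨hval, ?_⟩
  change finrank ℝ (affineSpan ℝ F').direction = _
  change finrank ℝ (affineSpan ℝ F).direction + 1 = _ at hdim
  rw [hcard, add_mul, one_mul] at hup
  rw [hcard, mul_assoc, add_mul, one_mul]
  omega

end Lifting

section SwapFacet

variable {V' : Type*} [Fintype V'] [DecidableEq V'] {G' : SimpleGraph V'} {C' : Set V'}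
  {u u' : V'} {m : ℕ} {a b : V' × Fin m → ℝ} {π0 : ℝ}

theorem valid_comp_twinSwap (htwin : gN G' C' u = gN G' C' u')
    (hval : ∀ p ∈ poly G' C' m, objective a b p ≤ π0) :
    ∀ p ∈ poly G' C' m, objective (fun q => a (Equiv.swap u u' q.1, q.2))
      (fun q => b (Equiv.swap u u' q.1, q.2)) p ≤ π0 := fun p hp =>
  objective_twinSwap a b p ▸ hval _ (twinSwap_mem_poly htwin hp)

theorem IsFacet.comp_twinSwap (htwin : gN G' C' u = gN G' C' u')
    (hf : IsFacet G' C' m (objective a b) π0) :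
    IsFacet G' C' m (objective (fun q => a (Equiv.swap u u' q.1, q.2))
      (fun q => b (Equiv.swap u u' q.1, q.2))) π0 := by
  refine ⟨valid_comp_twinSwap htwin hf.1, ?_⟩
  have hface : {p ∈ poly G' C' m | objective (fun q => a (Equiv.swap u u' q.1, q.2))
      (fun q => b (Equiv.swap u u' q.1, q.2)) p = π0}
      = (twinSwap u u').symm '' {p ∈ poly G' C' m | objective a b p = π0} := by
    rw [LinearEquiv.image_symm_eq_preimage]
    ext p
    simp only [Set.mem_ofPred_eq, Set.mem_preimage, ← objective_twinSwap]
    refine and_congr_left fun _ => ⟨twinSwap_mem_poly htwin, fun hp => ?_⟩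
    simpa using twinSwap_mem_poly (u := u) (u' := u') htwin hp
  rw [hface, LinearEquiv.finrank_direction_image]
  exact hf.2

end SwapFacet

/-- Inequality (16) has coefficients `πx1, πy1`, inequality (17) has `πx2, πy1`. -/
theorem twin_lifting_general {V' : Type*} [Fintype V'] [DecidableEq V']
    (G' : SimpleGraph V') (C' : Set V')
    (u u' : V') (hne : u ≠ u') (htwin : gN G' C' u = gN G' C' u')
    (m : ℕ) (hm3 : 3 ≤ m)
    (πx πy : ({w : V' // w ≠ u'} × Fin m) → ℝ) (π0 : ℝ)
    (hvalid : ∀ p ∈ poly (delVert G' u') (delSet C' u') m,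
      (∑ q, πx q * p.1 q) + (∑ q, πy q * p.2 q) ≤ π0)
    (hnonneg : ∀ j : Fin m, 0 ≤ πx (⟨u, hne⟩, j))
    (πx1 πy1 πx2 : (V' × Fin m) → ℝ)
    (hπx1 : ∀ (v : V') (j : Fin m),
      (v = u' → πx1 (v, j) = 0) ∧ ∀ h : v ≠ u', πx1 (v, j) = πx (⟨v, h⟩, j))
    (hπy1 : ∀ (v : V') (j : Fin m),
      (v = u' → πy1 (v, j) = πy (⟨u, hne⟩, j)) ∧ ∀ h : v ≠ u', πy1 (v, j) = πy (⟨v, h⟩, j))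
    (hπx2 : ∀ (v : V') (j : Fin m),
      (v = u' → πx2 (v, j) = πx (⟨u, hne⟩, j)) ∧ (v = u → πx2 (v, j) = 0) ∧
        ∀ (h1 : v ≠ u') (_ : v ≠ u), πx2 (v, j) = πx (⟨v, h1⟩, j)) :
    ((∀ p ∈ poly G' C' m, (∑ q, πx1 q * p.1 q) + (∑ q, πy1 q * p.2 q) ≤ π0) ∧
     (∀ p ∈ poly G' C' m, (∑ q, πx2 q * p.1 q) + (∑ q, πy1 q * p.2 q) ≤ π0)) ∧
    (((delVert G' u').Connected ∧ 3 ≤ Fintype.card {w : V' // w ≠ u'} ∧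
        TwinFree (delVert G' u') (delSet C' u') ∧
        IsFacet (delVert G' u') (delSet C' u') m
          (fun p => (∑ q, πx q * p.1 q) + (∑ q, πy q * p.2 q)) π0 ∧
        π0 ≠ 0) →
      IsFacet G' C' m (fun p => (∑ q, πx1 q * p.1 q) + (∑ q, πy1 q * p.2 q)) π0 ∧
      IsFacet G' C' m (fun p => (∑ q, πx2 q * p.1 q) + (∑ q, πy1 q * p.2 q)) π0) := by
  have hlift : IsTwinLift hne πx πy πx1 πy1 :=
    ⟨fun v i => (hπx1 v i).2 v.2, fun i => (hπx1 u' i).1 rfl,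
      fun v i => (hπy1 v i).2 v.2, fun i => (hπy1 u' i).1 rfl⟩
  have hx2 : (fun q : V' × Fin m => πx1 (Equiv.swap u u' q.1, q.2)) = πx2 := by
    funext ⟨v, i⟩
    rcases eq_or_ne v u with rfl | hu
    · rw [Equiv.swap_apply_left, hlift.x_self, (hπx2 v i).2.1 rfl]
    rcases eq_or_ne v u' with rfl | hu'
    · rw [Equiv.swap_apply_right, hlift.x_val ⟨u, hne⟩, (hπx2 v i).1 rfl]
    · rw [Equiv.swap_apply_of_ne_of_ne hu hu', (hπx1 v i).2 hu', (hπx2 v i).2.2 hu' hu]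
  have hval16 := hlift.valid htwin hnonneg hvalid
  have hval17 := valid_comp_twinSwap htwin hval16
  rw [hx2, hlift.comp_swap_snd] at hval17
  refine ⟨⟨hval16, hval17⟩, fun ⟨_, _, _, hfacet, hπ0⟩ => ?_⟩
  have hfacet16 := hlift.isFacet htwin (by omega) hπ0 hval16 hfacet
  have hfacet17 := hfacet16.comp_twinSwap htwin
  rw [hx2, hlift.comp_swap_snd] at hfacet17
  exact ⟨hfacet16, hfacet17⟩

/-- Lifting a valid/facet-defining inequality of `P = P(G'−u'; C'∖{u'})`
to the polytope `P' = P(G';C')` when `u, u'` are twins in `(G';C')`.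
`πx1, πy1` are the coefficient vectors of inequality (16) (coefficient `0` on `x_{u',j}` and
`π^y_{u,j}` on `y_{u',j}`); `πx2, πy1` give inequality (17) (the `x`-coefficients of `u` and
`u'` swapped). Both are valid for `P'`, and if moreover `G'−u'` is connected with at least 3
vertices, `(G'−u'; C'∖{u'})` is twin free, the original inequality is facet-defining for `P`
and `π₀ ≠ 0`, then (16) and (17) are facet-defining for `P'`. -/
theorem twin_lifting {V' : Type*} [Fintype V'] [DecidableEq V']
    (G' : SimpleGraph V') (C' : Set V')
    (hiso : ∀ v : V', v ∉ C' → ∃ z, G'.Adj v z)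
    (u u' : V') (hne : u ≠ u') (htwin : gN G' C' u = gN G' C' u')
    (m : ℕ) (hm3 : 3 ≤ m)
    (πx πy : ({w : V' // w ≠ u'} × Fin m) → ℝ) (π0 : ℝ)
    (hvalid : ∀ p ∈ poly (delVert G' u') (delSet C' u') m,
      (∑ q, πx q * p.1 q) + (∑ q, πy q * p.2 q) ≤ π0)
    (hnonneg : ∀ j : Fin m, 0 ≤ πx (⟨u, hne⟩, j))
    (πx1 πy1 πx2 : (V' × Fin m) → ℝ)
    (hπx1 : ∀ (v : V') (j : Fin m),
      (v = u' → πx1 (v, j) = 0) ∧ ∀ h : v ≠ u', πx1 (v, j) = πx (⟨v, h⟩, j))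
    (hπy1 : ∀ (v : V') (j : Fin m),
      (v = u' → πy1 (v, j) = πy (⟨u, hne⟩, j)) ∧ ∀ h : v ≠ u', πy1 (v, j) = πy (⟨v, h⟩, j))
    (hπx2 : ∀ (v : V') (j : Fin m),
      (v = u' → πx2 (v, j) = πx (⟨u, hne⟩, j)) ∧ (v = u → πx2 (v, j) = 0) ∧
        ∀ (h1 : v ≠ u') (_ : v ≠ u), πx2 (v, j) = πx (⟨v, h1⟩, j)) :
    ((∀ p ∈ poly G' C' m, (∑ q, πx1 q * p.1 q) + (∑ q, πy1 q * p.2 q) ≤ π0) ∧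
     (∀ p ∈ poly G' C' m, (∑ q, πx2 q * p.1 q) + (∑ q, πy1 q * p.2 q) ≤ π0)) ∧
    (((delVert G' u').Connected ∧ 3 ≤ Fintype.card {w : V' // w ≠ u'} ∧
        TwinFree (delVert G' u') (delSet C' u') ∧
        IsFacet (delVert G' u') (delSet C' u') m
          (fun p => (∑ q, πx q * p.1 q) + (∑ q, πy q * p.2 q)) π0 ∧
        π0 ≠ 0) →
      IsFacet G' C' m (fun p => (∑ q, πx1 q * p.1 q) + (∑ q, πy1 q * p.2 q)) π0 ∧
      IsFacet G' C' m (fun p => (∑ q, πx2 q * p.1 q) + (∑ q, πy1 q * p.2 q)) π0) :=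
  twin_lifting_general G' C' u u' hne htwin m hm3 πx πy π0 hvalid hnonneg πx1 πy1 πx2 hπx1 hπy1 hπx2

end LegalSeq
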